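/- Let A ∈ ℝ^{n×n}, p(λ) = λ^k + c₁λ^{k-1} + ⋯ + c_k a real monic polynomial with p(A) = 0, C the companion matrix of p, and D = {t ∈ ℝ : σ(I - tA) ∩ ℝ⁻₀ = ∅}. If (f₁(t),…,f_k(t))ᵀ is the solution on D of the initial value problem (I - tC)·x'(t) = -e₂, x(0) = 0, then for all t ∈ D, log(I - tA) = f₁(t)I + f₂(t)A + ⋯ + f_k(t)A^{k-1}. -/

import Mathlib

open Matrix Finset

/-- The companion matrix of `λ^k + c₁λ^{k-1} + ⋯ + c_k`. -/
noncomputable def companion (k : ℕ) (c : ℕ → ℝ) : Matrix (Fin k) (Fin k) ℝ :=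
  fun i j => if (j : ℕ) = k - 1 then -c (k - (i : ℕ)) else if (i : ℕ) = (j : ℕ) + 1 then 1 else 0

/-- `X` is the principal logarithm of `A`. -/
def IsPrincipalLog {n : ℕ} (A X : Matrix (Fin n) (Fin n) ℝ) : Prop :=
  NormedSpace.exp X = A ∧
    ∀ μ ∈ spectrum ℂ (X.map Complex.ofReal), -Real.pi < μ.im ∧ μ.im < Real.pi

/-!
The columns of the companion matrix encode multiplication by `A` on `span {1, A, …, A^(k-1)}`
(its last column is the relation `p(A) = 0`), so applying `u ↦ ∑ uᵢ Aⁱ` to the differential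
equation gives `(I - tA) L'(t) = -A` for `L(t) = ∑ fᵢ(t) Aⁱ`. Everything in sight commutes, so
`exp(-L(s)) (I - sA)` has zero derivative on the segment `[0, t]`, which lies in `D` because the
slit plane is star-shaped about `1`; hence `exp L(t) = I - tA`.

For an eigenvalue `λ` of `A`, `s ↦ ∑ fᵢ(s) λⁱ` is a continuous path of eigenvalues of `L(s)`
starting at `0`. Its exponential is an eigenvalue of `I - sA`, so it avoids `ℝ≤0`: the imaginary
part of the path never reaches `±π`, and by connectedness stays in `(-π, π)`.
-/

open Complex (slitPlane)

section Companion

variable {𝔸 : Type*} [Ring 𝔸] [Algebra ℝ 𝔸] {a : 𝔸} {k : ℕ} {c : ℕ → ℝ}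

theorem pow_eq_neg_sum_smul_pow
    (hp : a ^ k + ∑ i ∈ range k, c (i + 1) • a ^ (k - (i + 1)) = 0) :
    a ^ k = -∑ i : Fin k, c (k - i) • a ^ (i : ℕ) := by
  rw [eq_neg_of_add_eq_zero_left hp, Fin.sum_univ_eq_sum_range (fun i => c (k - i) • a ^ i),
    ← sum_range_reflect (fun i => c (k - i) • a ^ i) k]
  refine congrArg _ (sum_congr rfl fun i hi => ?_)
  have hi := mem_range.1 hi
  rw [show k - (k - 1 - i) = i + 1 by omega, show k - 1 - i = k - (i + 1) by omega]

theorem sum_companion_smul_pow (hp : a ^ k + ∑ i ∈ range k, c (i + 1) • a ^ (k - (i + 1)) = 0)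
    (j : Fin k) : ∑ i : Fin k, companion k c i j • a ^ (i : ℕ) = a ^ ((j : ℕ) + 1) := by
  by_cases hj : (j : ℕ) = k - 1
  · simp only [companion, hj, if_true, neg_smul, sum_neg_distrib]
    rw [Nat.sub_add_cancel (by omega), pow_eq_neg_sum_smul_pow hp]
  · have hlt : (j : ℕ) + 1 < k := by omega
    rw [sum_eq_single ⟨(j : ℕ) + 1, hlt⟩]
    · simp [companion, hj]
    · intro i _ hi
      simp [companion, hj, Fin.ext_iff.not.mp hi]
    · simp

theorem sum_companion_mulVec_smul_pow
    (hp : a ^ k + ∑ i ∈ range k, c (i + 1) • a ^ (k - (i + 1)) = 0) (u : Fin k → ℝ) :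
    ∑ i, (companion k c *ᵥ u) i • a ^ (i : ℕ) = a * ∑ i, u i • a ^ (i : ℕ) := by
  simp only [mulVec, dotProduct, sum_smul, mul_sum]
  rw [sum_comm]
  refine sum_congr rfl fun j _ => ?_
  simp_rw [mul_comm _ (u j), mul_smul, ← smul_sum, sum_companion_smul_pow hp, mul_smul_comm,
    ← pow_succ']

theorem one_sub_smul_mul_sum_smul_pow_eq_neg (hk : 2 ≤ k)
    (hp : a ^ k + ∑ i ∈ range k, c (i + 1) • a ^ (k - (i + 1)) = 0) {t : ℝ} {u : Fin k → ℝ}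
    (hu : (1 - t • companion k c) *ᵥ u = -Pi.single (⟨1, one_lt_two.trans_le hk⟩ : Fin k) 1) :
    (1 - t • a) * ∑ i, u i • a ^ (i : ℕ) = -a := by
  have hsum := congrArg (fun v : Fin k → ℝ => ∑ i, v i • a ^ (i : ℕ)) hu
  simp only [sub_mulVec, one_mulVec, smul_mulVec, Pi.sub_apply, Pi.smul_apply, sub_smul,
    smul_eq_mul, mul_smul, sum_sub_distrib, ← smul_sum, sum_companion_mulVec_smul_pow hp] at hsum
  rw [sub_mul, one_mul, smul_mul_assoc, hsum]
  simp [Pi.single_apply, ite_smul, sum_ite_eq']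

end Companion

section ExpODE

open NormedSpace

variable {𝔸 : Type*} [NormedRing 𝔸] [NormedAlgebra ℝ 𝔸] [CompleteSpace 𝔸]

theorem hasDerivAt_exp_of_commute {g : ℝ → 𝔸} {g' : 𝔸} {s : ℝ} (hg : HasDerivAt g g' s)
    (hcomm : ∀ y, Commute (g y) (g s)) : HasDerivAt (fun y => exp (g y)) (g' * exp (g s)) s := by
  let : NormedAlgebra ℚ 𝔸 := .restrictScalars ℚ ℝ 𝔸
  have hsplit : (fun y => exp (g y)) = fun y => exp (g y - g s) * exp (g s) := by
    ext y
    rw [← NormedSpace.exp_add_of_commute ((hcomm y).sub_left (Commute.refl _)), sub_add_cancel]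
  have hexp0 : HasFDerivAt exp (1 : 𝔸 →L[ℝ] 𝔸) (g s - g s) := by
    rw [sub_self]
    exact hasFDerivAt_exp_zero
  rw [hsplit]
  simpa using (hexp0.comp_hasDerivAt s (hg.sub_const (g s))).mul_const (exp (g s))

theorem exp_eq_one_sub_smul_of_hasDerivAt {g g' : ℝ → 𝔸} {b : 𝔸} {t : ℝ}
    (hg : ∀ s ∈ Set.uIcc 0 t, HasDerivAt g (g' s) s) (hg0 : g 0 = 0)
    (hgg : ∀ s u, Commute (g s) (g u)) (hgb : ∀ s, Commute (g s) b)
    (hg'b : ∀ s, Commute (g' s) b) (hode : ∀ s ∈ Set.uIcc 0 t, (1 - s • b) * g' s = -b) :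
    exp (g t) = 1 - t • b := by
  let : NormedAlgebra ℚ 𝔸 := .restrictScalars ℚ ℝ 𝔸
  set φ : ℝ → 𝔸 := fun s => exp (-g s) * (1 - s • b)
  have hφ : ∀ s ∈ Set.uIcc 0 t, HasDerivAt φ 0 s := by
    intro s hs
    have hexp := hasDerivAt_exp_of_commute (hg s hs).neg fun y => ((hgg y s).neg_left).neg_right
    have hline : HasDerivAt (fun y : ℝ => 1 - y • b) (-b) s := by
      simpa using ((hasDerivAt_id s).smul_const b).const_sub 1
    refine (hexp.mul hline).congr_deriv ?_
    have hE : Commute (exp (-g s)) (1 - s • b) :=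
      ((Commute.one_right _).sub_right ((hgb s).neg_left.smul_right s)).exp_left
    have hg' : Commute (g' s) (1 - s • b) := (Commute.one_right _).sub_right ((hg'b s).smul_right s)
    calc -g' s * exp (-g s) * (1 - s • b) + exp (-g s) * -b
        = -(((1 - s • b) * g' s) * exp (-g s)) + exp (-g s) * -b := by
          rw [neg_mul, neg_mul, mul_assoc (g' s), hE.eq, ← mul_assoc, hg'.eq]
      _ = 0 := by
          rw [hode s hs, neg_mul, neg_neg, mul_neg, ((hgb s).neg_left.exp_left).eq, add_neg_cancel]
  have hconst : φ t = φ 0 := by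
    have := (convex_uIcc (0 : ℝ) t).norm_image_sub_le_of_norm_hasDerivWithin_le
      (fun s hs => (hφ s hs).hasDerivWithinAt) (fun _ _ => (norm_zero (E := 𝔸)).le)
      Set.left_mem_uIcc Set.right_mem_uIcc
    simpa [sub_eq_zero] using this
  have hinv : exp (-g t) * (1 - t • b) = 1 := by simpa [φ, hg0] using hconst
  calc exp (g t) = exp (g t) * (exp (-g t) * (1 - t • b)) := by rw [hinv, mul_one]
    _ = 1 - t • b := by
      rw [← mul_assoc, ← NormedSpace.exp_add_of_commute (Commute.refl _).neg_right,
        add_neg_cancel, exp_zero, one_mul]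

theorem exp_sum_smul_pow_eq_one_sub_smul {k : ℕ} {a : 𝔸} {w w' : ℝ → Fin k → ℝ} {t : ℝ}
    (hw : ∀ s ∈ Set.uIcc 0 t, ∀ i, HasDerivAt (fun s => w s i) (w' s i) s) (hw0 : w 0 = 0)
    (hode : ∀ s ∈ Set.uIcc 0 t, (1 - s • a) * ∑ i, w' s i • a ^ (i : ℕ) = -a) :
    exp (∑ i, w t i • a ^ (i : ℕ)) = 1 - t • a := by
  have hcomm (v v' : Fin k → ℝ) : Commute (∑ i, v i • a ^ (i : ℕ)) (∑ i, v' i • a ^ (i : ℕ)) :=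
    .sum_left _ _ _ fun _ _ => .sum_right _ _ _ fun _ _ =>
      ((Commute.pow_pow_self a _ _).smul_left _).smul_right _
  have hcomm_a (v : Fin k → ℝ) : Commute (∑ i, v i • a ^ (i : ℕ)) a :=
    .sum_left _ _ _ fun _ _ => (Commute.pow_self a _).smul_left _
  exact exp_eq_one_sub_smul_of_hasDerivAt (g := fun s => ∑ i, w s i • a ^ (i : ℕ))
    (fun s hs => .fun_sum fun i _ => (hw s hs i).smul_const _) (by simp [hw0])
    (fun _ _ => hcomm _ _) (fun _ => hcomm_a _) (fun _ => hcomm_a _) hode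

end ExpODE

theorem Complex.nonpos_reals_eq_compl_slitPlane :
    {z : ℂ | ∃ r : ℝ, r ≤ 0 ∧ z = r} = slitPlaneᶜ := by
  ext z
  simp only [Set.mem_ofPred_eq, Set.mem_compl_iff, Complex.mem_slitPlane_iff, not_or, not_lt,
    not_not]
  constructor
  · rintro ⟨r, hr, rfl⟩
    simpa using hr
  · rintro ⟨hre, him⟩
    exact ⟨z.re, hre, Complex.ext rfl (by simpa using him)⟩

theorem spectrum.map_polynomial_aeval_of_finiteDimensional {𝕜 A : Type*} [Field 𝕜] [IsAlgClosed 𝕜]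
    [Ring A] [Algebra 𝕜 A] [FiniteDimensional 𝕜 A] (a : A) (p : Polynomial 𝕜) :
    spectrum 𝕜 (Polynomial.aeval a p) = (Polynomial.eval · p) '' spectrum 𝕜 a := by
  cases subsingleton_or_nontrivial A
  · simp [spectrum.of_subsingleton]
  · exact spectrum.map_polynomial_aeval_of_nonempty a p
      (spectrum.nonempty_of_isAlgClosed_of_finiteDimensional 𝕜 a)

theorem Complex.one_sub_mul_mem_slitPlane_of_mem_uIcc {t s : ℝ} {z : ℂ}
    (ht : 1 - t * z ∈ slitPlane) (hs : s ∈ Set.uIcc 0 t) : 1 - s * z ∈ slitPlane := by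
  rcases eq_or_ne t 0 with rfl | ht0
  · simp_all
  have hθ : s / t ∈ Set.Icc (0 : ℝ) 1 := by
    rcases Set.mem_uIcc.1 hs with ⟨h0, h1⟩ | ⟨h0, h1⟩
    · exact ⟨div_nonneg h0 (h0.trans h1), div_le_one_of_le₀ h1 (h0.trans h1)⟩
    · exact ⟨div_nonneg_of_nonpos h1 (h1.trans' h0), div_le_one_of_ge h0 (h1.trans' h0)⟩
  convert starConvex_one_slitPlane.add_smul_mem (by rwa [← sub_eq_add_neg]) hθ.1 hθ.2 using 1
  have ht0' : (t : ℂ) ≠ 0 := Complex.ofReal_ne_zero.2 ht0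
  rw [Complex.real_smul]
  push_cast
  field_simp
  ring

section Spectrum

variable {A : Type*} [Ring A] [Algebra ℂ A] [FiniteDimensional ℂ A]

theorem spectrum_one_sub_smul_subset_slitPlane_of_mem_uIcc {a : A} {t s : ℝ}
    (ht : spectrum ℂ (1 - (t : ℂ) • a) ⊆ slitPlane) (hs : s ∈ Set.uIcc 0 t) :
    spectrum ℂ (1 - (s : ℂ) • a) ⊆ slitPlane := by
  have haeval (r : ℂ) : 1 - r • a = Polynomial.aeval a (1 - Polynomial.C r * Polynomial.X) := by
    simp [Algebra.smul_def]
  rw [haeval, spectrum.map_polynomial_aeval_of_finiteDimensional]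
  rintro _ ⟨z, hz, rfl⟩
  have hzt := ht (by
    rw [haeval, spectrum.map_polynomial_aeval_of_finiteDimensional]; exact ⟨z, hz, rfl⟩)
  simpa using Complex.one_sub_mul_mem_slitPlane_of_mem_uIcc (by simpa using hzt) hs

theorem spectrum_sum_smul_pow {k : ℕ} (a : A) (w : Fin k → ℂ) :
    spectrum ℂ (∑ i, w i • a ^ (i : ℕ)) = (fun z => ∑ i, w i * z ^ (i : ℕ)) '' spectrum ℂ a := by
  have : ∑ i, w i • a ^ (i : ℕ) =
      Polynomial.aeval a (∑ i, Polynomial.C (w i) * Polynomial.X ^ (i : ℕ)) := by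
    simp [Algebra.smul_def]
  rw [this, spectrum.map_polynomial_aeval_of_finiteDimensional]
  simp [Polynomial.eval_finsetSum]

end Spectrum

theorem Complex.im_ne_pi_of_exp_mem_slitPlane {z : ℂ} (hz : Complex.exp z ∈ slitPlane) :
    z.im ≠ Real.pi ∧ z.im ≠ -Real.pi := by
  rw [Complex.exp_mem_slitPlane] at hz
  constructor <;> rintro him <;> rw [him] at hz <;> apply hz
  · exact (toIocMod_eq_self Real.two_pi_pos).2 ⟨by linarith [Real.pi_pos], by linarith⟩
  · rw [toIocMod_apply_left]
    ring

theorem Complex.im_mem_Ioo_of_exp_mem_slitPlane {h : ℝ → ℂ} {t : ℝ}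
    (hc : ContinuousOn h (Set.uIcc 0 t)) (h0 : h 0 = 0)
    (hexp : ∀ s ∈ Set.uIcc 0 t, Complex.exp (h s) ∈ slitPlane) :
    (h t).im ∈ Set.Ioo (-Real.pi) Real.pi := by
  set S := (fun s => (h s).im) '' Set.uIcc 0 t
  have hS : IsPreconnected S := isPreconnected_uIcc.image _ (continuous_im.comp_continuousOn hc)
  have h0S : (0 : ℝ) ∈ S := ⟨0, Set.left_mem_uIcc, by simp [h0]⟩
  have htS : (h t).im ∈ S := ⟨t, Set.right_mem_uIcc, rfl⟩
  have hπS : Real.pi ∉ S ∧ -Real.pi ∉ S := by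
    constructor <;> rintro ⟨s, hs, hs'⟩
    exacts [(im_ne_pi_of_exp_mem_slitPlane (hexp s hs)).1 hs',
      (im_ne_pi_of_exp_mem_slitPlane (hexp s hs)).2 hs']
  constructor <;> by_contra! hle
  · exact hπS.2 (hS.Icc_subset htS h0S ⟨hle, by linarith [Real.pi_pos]⟩)
  · exact hπS.1 (hS.Icc_subset h0S htS ⟨Real.pi_pos.le, hle⟩)

theorem im_mem_Ioo_of_mem_spectrum_sum_smul_pow {A : Type*} [NormedRing A] [NormedAlgebra ℂ A]
    [CompleteSpace A] [FiniteDimensional ℂ A] {k : ℕ} (a : A) {w : ℝ → Fin k → ℝ} {t : ℝ}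
    (hw : ∀ i, ContinuousOn (fun s => w s i) (Set.uIcc 0 t)) (hw0 : w 0 = 0)
    (hexp : ∀ s ∈ Set.uIcc 0 t,
      spectrum ℂ (NormedSpace.exp (∑ i, (w s i : ℂ) • a ^ (i : ℕ))) ⊆ slitPlane)
    {μ : ℂ} (hμ : μ ∈ spectrum ℂ (∑ i, (w t i : ℂ) • a ^ (i : ℕ))) :
    μ.im ∈ Set.Ioo (-Real.pi) Real.pi := by
  rw [spectrum_sum_smul_pow] at hμ
  obtain ⟨z, hz, rfl⟩ := hμ
  refine Complex.im_mem_Ioo_of_exp_mem_slitPlane (h := fun s => ∑ i, (w s i : ℂ) * z ^ (i : ℕ))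
    ?_ (by simp [hw0]) fun s hs => hexp s hs ?_
  · exact continuousOn_finsetSum _ fun i _ =>
      (Complex.continuous_ofReal.comp_continuousOn (hw i)).mul continuousOn_const
  · rw [Complex.exp_eq_exp_ℂ]
    exact spectrum.exp_mem_exp _ (by rw [spectrum_sum_smul_pow]; exact ⟨z, hz, rfl⟩)

section MatrixComplexification

variable {ι : Type*} [Fintype ι] [DecidableEq ι]

theorem Matrix.map_ofReal_eq_mapMatrix (X : Matrix ι ι ℝ) :
    X.map Complex.ofReal = Complex.ofRealAm.mapMatrix X := by
  rw [AlgHom.mapMatrix_apply, Complex.ofRealAm_coe]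

theorem Matrix.map_ofReal_one_sub_smul (A : Matrix ι ι ℝ) (t : ℝ) :
    (1 - t • A).map Complex.ofReal = 1 - (t : ℂ) • A.map Complex.ofReal := by
  simp only [map_ofReal_eq_mapMatrix, map_sub, map_one, map_smul, Complex.coe_smul]

theorem Matrix.map_ofReal_sum_smul_pow {k : ℕ} (A : Matrix ι ι ℝ) (w : Fin k → ℝ) :
    (∑ i, w i • A ^ (i : ℕ)).map Complex.ofReal =
      ∑ i, (w i : ℂ) • A.map Complex.ofReal ^ (i : ℕ) := by
  simp only [map_ofReal_eq_mapMatrix, map_sum, map_smul, map_pow, Complex.coe_smul]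

theorem Matrix.map_ofReal_exp (X : Matrix ι ι ℝ) :
    (NormedSpace.exp X).map Complex.ofReal = NormedSpace.exp (X.map Complex.ofReal) := by
  let : NormedRing (Matrix ι ι ℝ) := Matrix.linftyOpNormedRing
  let : NormedAlgebra ℝ (Matrix ι ι ℝ) := Matrix.linftyOpNormedAlgebra
  let : NormedAlgebra ℚ (Matrix ι ι ℝ) := .restrictScalars ℚ ℝ _
  let : NormedRing (Matrix ι ι ℂ) := Matrix.linftyOpNormedRing
  simp only [map_ofReal_eq_mapMatrix]
  exact NormedSpace.map_exp _ (continuous_id.matrix_map Complex.continuous_ofReal :) X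

end MatrixComplexification

/-- Putzer-type formula for the logarithm: if `(f₁,…,f_k)ᵀ` solves the IVP
`(I - tC)ẋ = -e₂`, `x(0) = 0` on `D = {t : σ(I - tA) ∩ ℝ⁻₀ = ∅}`, then
`log(I - tA) = f₁(t)I + f₂(t)A + ⋯ + f_k(t)A^{k-1}` on `D`. -/
theorem log_eq_putzer (n k : ℕ) (hk : 2 ≤ k) (A : Matrix (Fin n) (Fin n) ℝ) (c : ℕ → ℝ)
    (hp : A ^ k + ∑ i ∈ range k, c (i + 1) • A ^ (k - (i + 1)) = 0)
    (D : Set ℝ)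
    (hD : D = {t : ℝ |
      spectrum ℂ (((1 : Matrix (Fin n) (Fin n) ℝ) - t • A).map Complex.ofReal) ∩
        {z : ℂ | ∃ r : ℝ, r ≤ 0 ∧ z = (r : ℂ)} = ∅})
    (f f' : ℝ → Fin k → ℝ)
    (hderiv : ∀ t ∈ D, ∀ i : Fin k, HasDerivAt (fun s => f s i) (f' t i) t)
    (hinit : f 0 = 0)
    (hode : ∀ t ∈ D,
      ((1 : Matrix (Fin k) (Fin k) ℝ) - t • companion k c).mulVec (f' t) =
        -Pi.single (⟨1, by omega⟩ : Fin k) 1) :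
    ∀ t ∈ D, IsPrincipalLog ((1 : Matrix (Fin n) (Fin n) ℝ) - t • A)
      (∑ i : Fin k, f t i • A ^ (i : ℕ)) := by
  intro t ht
  have hD' (s : ℝ) : s ∈ D ↔ spectrum ℂ (1 - (s : ℂ) • A.map Complex.ofReal) ⊆ slitPlane := by
    rw [hD, Set.mem_ofPred_eq, Complex.nonpos_reals_eq_compl_slitPlane, ← Set.sdiff_eq,
      Set.sdiff_eq_empty, Matrix.map_ofReal_one_sub_smul]
  have hseg : Set.uIcc 0 t ⊆ D := fun s hs =>
    (hD' s).2 (spectrum_one_sub_smul_subset_slitPlane_of_mem_uIcc ((hD' t).1 ht) hs)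
  -- Matrices carry no global norm; `exp` only sees the topology, which every matrix norm induces.
  have hexp : ∀ s ∈ Set.uIcc 0 t, NormedSpace.exp (∑ i, f s i • A ^ (i : ℕ)) = 1 - s • A := by
    let : NormedRing (Matrix (Fin n) (Fin n) ℝ) := Matrix.linftyOpNormedRing
    let : NormedAlgebra ℝ (Matrix (Fin n) (Fin n) ℝ) := Matrix.linftyOpNormedAlgebra
    intro s hs
    have hsub : Set.uIcc 0 s ⊆ D := (Set.uIcc_subset_uIcc Set.left_mem_uIcc hs).trans hseg
    exact exp_sum_smul_pow_eq_one_sub_smul (fun r hr => hderiv r (hsub hr)) hinit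
      fun r hr => one_sub_smul_mul_sum_smul_pow_eq_neg hk hp (hode r (hsub hr))
  have hexpC : ∀ s ∈ Set.uIcc 0 t, spectrum ℂ (NormedSpace.exp
      (∑ i, (f s i : ℂ) • A.map Complex.ofReal ^ (i : ℕ))) ⊆ slitPlane := fun s hs => by
    rw [← Matrix.map_ofReal_sum_smul_pow, ← Matrix.map_ofReal_exp, hexp s hs,
      Matrix.map_ofReal_one_sub_smul, ← hD']
    exact hseg hs
  refine ⟨hexp t Set.right_mem_uIcc, fun μ hμ => ?_⟩
  rw [Matrix.map_ofReal_sum_smul_pow] at hμ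
  let : NormedRing (Matrix (Fin n) (Fin n) ℂ) := Matrix.linftyOpNormedRing
  let : NormedAlgebra ℂ (Matrix (Fin n) (Fin n) ℂ) := Matrix.linftyOpNormedAlgebra
  exact im_mem_Ioo_of_mem_spectrum_sum_smul_pow _
    (fun i => HasDerivAt.continuousOn fun s hs => hderiv s (hseg hs) i) hinit hexpC hμ
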